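/- Let π = p⊗Q with p∈Δ(K) and Q∈Δ(L)^K, let x∈∂^+v_θ(·,Q)(p) where v_θ(p',Q) := v_θ(p'⊗Q) denotes the value of the repeated game 𝒢_θ(p'⊗Q) (extended by −∞ outside Δ(K)), let ε≥0, and let t̂_ε be a strategy of player 2 that is ε-optimal in the dual game 𝒟[𝒢_θ](x,Q;𝟏), i.e. sup_{(p',ŝ)} h_θ[x,Q;𝟏](p',ŝ,t̂_ε) ≤ w^+_θ(x,Q;𝟏) + ε. Then t̂_ε is ε-optimal for player 2 in 𝒢_θ(π): sup_{ŝ} γ_θ(π,ŝ,t̂_ε) ≤ v_θ(π) + ε. -/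

import Mathlib

open scoped BigOperators

noncomputable section RepeatedGames

/-- Probability of a finite history (list of action pairs, in chronological
order) under behavioral strategies `s`, `t` (which map the list of past action
pairs to a mixed action). -/
def probH {I J : Type*} (s : List (I × J) → I → ℝ) (t : List (I × J) → J → ℝ) :
    List (I × J) → ℝ
  | [] => 1
  | a :: h =>
      s [] a.1 * t [] a.2 *
        probH (fun h' => s (a :: h')) (fun h' => t (a :: h')) h

/-- Expected stage payoff at stage `m+1` (i.e. after `m` completed stages). -/
def stagePay {I J : Type*} [Fintype I] [Fintype J]
    (s : List (I × J) → I → ℝ) (t : List (I × J) → J → ℝ)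
    (g : I → J → ℝ) (m : ℕ) : ℝ :=
  ∑ h : Fin m → I × J,
    probH s t (List.ofFn h) *
      ∑ i, ∑ j, s (List.ofFn h) i * t (List.ofFn h) j * g i j

/-- Behavioral strategies of a player with type set `X` and action set `A`,
observing histories in `(I × J)^*`. -/
def Strat (I J X A : Type*) [Fintype A] : Type _ :=
  {f : X → List (I × J) → A → ℝ // ∀ x h, f x h ∈ stdSimplex ℝ A}

instance {I J X A : Type*} [Fintype A] [Nonempty A] :
    Nonempty (Strat I J X A) := by
  refine ⟨⟨fun _ _ _ => (Fintype.card A : ℝ)⁻¹, fun x h => ⟨fun a => by positivity, ?_⟩⟩⟩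
  have hA : (Fintype.card A : ℝ) ≠ 0 := by
    exact_mod_cast Fintype.card_ne_zero
  simp [Finset.sum_const, Finset.card_univ, nsmul_eq_mul, mul_inv_cancel₀ hA]

/-- The auxiliary `θ`-weighted payoff `γ_θ(π, ŝ, t̂; ζ)`. -/
def payA {I J K L : Type*} [Fintype I] [Fintype J] [Fintype K] [Fintype L]
    (θ : ℕ → ℝ) (G : K → L → I → J → ℝ) (π : K × L → ℝ) (ζ : K → ℝ)
    (s : Strat I J K I) (t : Strat I J L J) : ℝ :=
  ∑ k, ∑ l, π (k, l) * ζ k *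
    ∑' m : ℕ, θ m * stagePay (s.1 k) (t.1 l) (G k l) m

/-- The `θ`-weighted payoff `γ_θ(π, ŝ, t̂)`. -/
def pay {I J K L : Type*} [Fintype I] [Fintype J] [Fintype K] [Fintype L]
    (θ : ℕ → ℝ) (G : K → L → I → J → ℝ) (π : K × L → ℝ)
    (s : Strat I J K I) (t : Strat I J L J) : ℝ :=
  payA θ G π (fun _ => 1) s t

/-- Maxmin `v⁻_θ(π)` of the repeated game `𝒢_θ(π)`. -/
def vMinus {I J K L : Type*} [Fintype I] [Fintype J] [Fintype K] [Fintype L]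
    (θ : ℕ → ℝ) (G : K → L → I → J → ℝ) (π : K × L → ℝ) : ℝ :=
  ⨆ s : Strat I J K I, ⨅ t : Strat I J L J, pay θ G π s t

/-- Minmax `v⁺_θ(π)` of the repeated game `𝒢_θ(π)`. -/
def vPlus {I J K L : Type*} [Fintype I] [Fintype J] [Fintype K] [Fintype L]
    (θ : ℕ → ℝ) (G : K → L → I → J → ℝ) (π : K × L → ℝ) : ℝ :=
  ⨅ t : Strat I J L J, ⨆ s : Strat I J K I, pay θ G π s t

/-- Dual payoff `h_θ[x,Q;ζ](p,ŝ,t̂) = γ_θ(p⊗Q, ŝ, t̂; ζ) − ⟨p,x⟩`. -/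
def hDual {I J K L : Type*} [Fintype I] [Fintype J] [Fintype K] [Fintype L]
    (θ : ℕ → ℝ) (G : K → L → I → J → ℝ) (x : K → ℝ) (Q : K → L → ℝ)
    (ζ : K → ℝ) (p : K → ℝ) (s : Strat I J K I) (t : Strat I J L J) : ℝ :=
  payA θ G (fun kl => p kl.1 * Q kl.1 kl.2) ζ s t - ∑ k, p k * x k

/-- Maxmin `w⁻_θ(x,Q;ζ)` of the dual game `𝒟[𝒢_θ](x,Q;ζ)`. -/
def wMinus {I J K L : Type*} [Fintype I] [Fintype J] [Fintype K] [Fintype L]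
    (θ : ℕ → ℝ) (G : K → L → I → J → ℝ) (x : K → ℝ) (Q : K → L → ℝ)
    (ζ : K → ℝ) : ℝ :=
  ⨆ ps : stdSimplex ℝ K × Strat I J K I, ⨅ t : Strat I J L J,
    hDual θ G x Q ζ (ps.1 : K → ℝ) ps.2 t

/-- Minmax `w⁺_θ(x,Q;ζ)` of the dual game `𝒟[𝒢_θ](x,Q;ζ)`. -/
def wPlus {I J K L : Type*} [Fintype I] [Fintype J] [Fintype K] [Fintype L]
    (θ : ℕ → ℝ) (G : K → L → I → J → ℝ) (x : K → ℝ) (Q : K → L → ℝ)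
    (ζ : K → ℝ) : ℝ :=
  ⨅ t : Strat I J L J, ⨆ ps : stdSimplex ℝ K × Strat I J K I,
    hDual θ G x Q ζ (ps.1 : K → ℝ) ps.2 t

end RepeatedGames

/-!
Against a fixed strategy `t` of player 2, player 1's best payoff in `𝒢_θ(q ⊗ Q)` is
`∑ k, q k * V k t`, where `V k t` is the best-reply payoff of type `k`. Mixing two behavioral
strategies of player 2 history by history with posterior weights (Kuhn) shows that `t ↦ V k t`
is convex. In the dual game the payoff against `t` is at most `maxₖ (V k t - x k)`, so
`w⁺ ≤ maxₖ (V k t - x k)` for every `t`, and separating in `ℝ^K` yields `q ∈ Δ(K)` with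
`w⁺ + ⟨q, x⟩ ≤ v_θ(q ⊗ Q)`. The supergradient inequality at `p` turns this into
`w⁺ ≤ v_θ(p ⊗ Q) - ⟨p, x⟩`. Finally, letting player 1 announce `p` in the dual game bounds his
best reply to `t̂ε` in `𝒢_θ(p ⊗ Q)` by `w⁺ + ε + ⟨p, x⟩`.
-/

open Finset

noncomputable section

section Simplex

variable {ι : Type*} [Fintype ι] {w f : ι → ℝ} {C : ℝ}

lemma sum_mul_le_of_mem_stdSimplex (hw : w ∈ stdSimplex ℝ ι) (hf : ∀ i, f i ≤ C) :
    ∑ i, w i * f i ≤ C :=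
  calc ∑ i, w i * f i ≤ ∑ i, w i * C :=
        sum_le_sum fun i _ => mul_le_mul_of_nonneg_left (hf i) (hw.1 i)
    _ = C := by rw [← sum_mul, hw.2, one_mul]

lemma le_sum_mul_of_mem_stdSimplex (hw : w ∈ stdSimplex ℝ ι) (hf : ∀ i, C ≤ f i) :
    C ≤ ∑ i, w i * f i :=
  calc C = ∑ i, w i * C := by rw [← sum_mul, hw.2, one_mul]
    _ ≤ ∑ i, w i * f i := sum_le_sum fun i _ => mul_le_mul_of_nonneg_left (hf i) (hw.1 i)

lemma abs_sum_mul_le_of_mem_stdSimplex (hw : w ∈ stdSimplex ℝ ι) (hf : ∀ i, |f i| ≤ C) :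
    |∑ i, w i * f i| ≤ C :=
  abs_le.2 ⟨le_sum_mul_of_mem_stdSimplex hw fun i => (abs_le.1 (hf i)).1,
    sum_mul_le_of_mem_stdSimplex hw fun i => (abs_le.1 (hf i)).2⟩

end Simplex

section Evaluation

variable {β : Type*} {θ a : β → ℝ} {C : ℝ}

lemma summable_mul_of_abs_le (hθ0 : ∀ m, 0 ≤ θ m) (hθ1 : HasSum θ 1) (ha : ∀ m, |a m| ≤ C) :
    Summable fun m => θ m * a m :=
  Summable.of_norm_bounded (hθ1.summable.mul_right C) fun m => by
    rw [Real.norm_eq_abs, abs_mul, abs_of_nonneg (hθ0 m)]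
    exact mul_le_mul_of_nonneg_left (ha m) (hθ0 m)

lemma abs_tsum_mul_le (hθ0 : ∀ m, 0 ≤ θ m) (hθ1 : HasSum θ 1) (ha : ∀ m, |a m| ≤ C) :
    |∑' m, θ m * a m| ≤ C := by
  have hsum := (summable_mul_of_abs_le hθ0 hθ1 ha).hasSum
  refine abs_le.2 ⟨?_, ?_⟩
  · refine hasSum_le (fun m => ?_) (by simpa only [one_mul] using hθ1.mul_right (-C)) hsum
    exact mul_le_mul_of_nonneg_left (abs_le.1 (ha m)).1 (hθ0 m)
  · refine hasSum_le (fun m => ?_) hsum (by simpa only [one_mul] using hθ1.mul_right C)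
    exact mul_le_mul_of_nonneg_left (abs_le.1 (ha m)).2 (hθ0 m)

end Evaluation

section PathProb

variable {α A : Type*}

/-- The probability that a player using the behavioral strategy `f` plays, at each stage of the
history, the component `pr a` of the corresponding entry `a`. -/
def pathProb (pr : α → A) (f : List α → A → ℝ) : List α → ℝ
  | [] => 1
  | a :: h => f [] (pr a) * pathProb pr (fun h' => f (a :: h')) h

lemma pathProb_nonneg (pr : α → A) {f : List α → A → ℝ} (hf : ∀ h a, 0 ≤ f h a)
    (h : List α) : 0 ≤ pathProb pr f h := by
  induction h generalizing f with
  | nil => exact zero_le_one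
  | cons a h ih => exact mul_nonneg (hf _ _) (ih fun _ _ => hf _ _)

lemma pathProb_append (pr : α → A) (f : List α → A → ℝ) (h : List α) (a : α) :
    pathProb pr f (h ++ [a]) = pathProb pr f h * f h (pr a) := by
  induction h generalizing f with
  | nil => simp [pathProb]
  | cons b h ih => simp [pathProb, ih, mul_assoc]

end PathProb

section Histories

variable {I J : Type*}

lemma probH_eq_pathProb_mul (s : List (I × J) → I → ℝ) (t : List (I × J) → J → ℝ)
    (h : List (I × J)) : probH s t h = pathProb Prod.fst s h * pathProb Prod.snd t h := by
  induction h generalizing s t with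
  | nil => simp [probH, pathProb]
  | cons a h ih => simp only [probH, pathProb, ih]; ring

variable [Fintype I] [Fintype J] {s : List (I × J) → I → ℝ} {t : List (I × J) → J → ℝ}

lemma sum_probH_ofFn (hs : ∀ h, s h ∈ stdSimplex ℝ I) (ht : ∀ h, t h ∈ stdSimplex ℝ J)
    (m : ℕ) : ∑ h : Fin m → I × J, probH s t (List.ofFn h) = 1 := by
  induction m generalizing s t with
  | zero => simp [probH]
  | succ m ih =>
    have hcons (a : I × J) (h : Fin m → I × J) :
        probH s t (List.ofFn (Fin.consEquiv _ (a, h))) =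
          s [] a.1 * t [] a.2 *
            probH (fun h' => s (a :: h')) (fun h' => t (a :: h')) (List.ofFn h) := by
      simp [List.ofFn_succ, probH]
    rw [← (Fin.consEquiv fun _ => I × J).sum_comp, Fintype.sum_prod_type]
    simp only [hcons, ← mul_sum, ih (fun _ => hs _) (fun _ => ht _), mul_one,
      Fintype.sum_prod_type, (hs []).2, (ht []).2]

lemma probH_mem_stdSimplex (hs : ∀ h, s h ∈ stdSimplex ℝ I) (ht : ∀ h, t h ∈ stdSimplex ℝ J)
    (m : ℕ) : (fun h : Fin m → I × J => probH s t (List.ofFn h)) ∈ stdSimplex ℝ _ := by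
  refine ⟨fun h => ?_, sum_probH_ofFn hs ht m⟩
  dsimp only
  rw [probH_eq_pathProb_mul]
  exact mul_nonneg (pathProb_nonneg _ (fun h => (hs h).1) _)
    (pathProb_nonneg _ (fun h => (ht h).1) _)

lemma abs_stagePay_le {g : I → J → ℝ} {C : ℝ} (hs : ∀ h, s h ∈ stdSimplex ℝ I)
    (ht : ∀ h, t h ∈ stdSimplex ℝ J) (hg : ∀ i j, |g i j| ≤ C) (m : ℕ) :
    |stagePay s t g m| ≤ C := by
  refine abs_sum_mul_le_of_mem_stdSimplex (probH_mem_stdSimplex hs ht m) fun h => ?_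
  simp only [mul_assoc, ← mul_sum]
  exact abs_sum_mul_le_of_mem_stdSimplex (hs _) fun i =>
    abs_sum_mul_le_of_mem_stdSimplex (ht _) (hg i)

end Histories

section TypePayoff

variable {I J K L : Type*} [Fintype I] [Fintype J] [Fintype L]
  {θ : ℕ → ℝ} {G : K → L → I → J → ℝ} {Q : K → L → ℝ} {C : ℝ}

def typePay (θ : ℕ → ℝ) (G : K → L → I → J → ℝ) (Q : K → L → ℝ) (k : K)
    (s : Strat I J K I) (t : Strat I J L J) : ℝ :=
  ∑ l, Q k l * ∑' m, θ m * stagePay (s.1 k) (t.1 l) (G k l) m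

def bestReplyPay (θ : ℕ → ℝ) (G : K → L → I → J → ℝ) (Q : K → L → ℝ) (k : K)
    (t : Strat I J L J) : ℝ :=
  ⨆ s : Strat I J K I, typePay θ G Q k s t

lemma pay_tensor_eq_sum_typePay [Fintype K] (p : K → ℝ) (s : Strat I J K I) (t : Strat I J L J) :
    pay θ G (fun kl => p kl.1 * Q kl.1 kl.2) s t = ∑ k, p k * typePay θ G Q k s t := by
  simp only [pay, payA, typePay, mul_sum, mul_one, mul_assoc]

lemma hDual_one_eq_sum [Fintype K] (x p : K → ℝ) (s : Strat I J K I) (t : Strat I J L J) :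
    hDual θ G x Q (fun _ => 1) p s t = ∑ k, p k * (typePay θ G Q k s t - x k) := by
  rw [hDual, ← pay, pay_tensor_eq_sum_typePay]
  simp only [mul_sub, sum_sub_distrib]

lemma abs_typePay_le (hθ0 : ∀ m, 0 ≤ θ m) (hθ1 : HasSum θ 1) (hQ : ∀ k, Q k ∈ stdSimplex ℝ L)
    (hG : ∀ k l i j, |G k l i j| ≤ C) (k : K) (s : Strat I J K I) (t : Strat I J L J) :
    |typePay θ G Q k s t| ≤ C :=
  abs_sum_mul_le_of_mem_stdSimplex (hQ k) fun l =>
    abs_tsum_mul_le hθ0 hθ1 (abs_stagePay_le (s.2 k) (t.2 l) (hG k l))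

lemma typePay_le_bestReplyPay (hθ0 : ∀ m, 0 ≤ θ m) (hθ1 : HasSum θ 1)
    (hQ : ∀ k, Q k ∈ stdSimplex ℝ L) (hG : ∀ k l i j, |G k l i j| ≤ C) (k : K)
    (s : Strat I J K I) (t : Strat I J L J) :
    typePay θ G Q k s t ≤ bestReplyPay θ G Q k t :=
  le_ciSup ⟨C, by rintro _ ⟨s, rfl⟩; exact (abs_le.1 (abs_typePay_le hθ0 hθ1 hQ hG k s t)).2⟩ s

/-- A strategy of player 1 is a family of strategies of his types, which best-reply separately. -/
lemma ciSup_pay_tensor [Fintype K] [Nonempty I] (hθ0 : ∀ m, 0 ≤ θ m) (hθ1 : HasSum θ 1)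
    (hQ : ∀ k, Q k ∈ stdSimplex ℝ L) (hG : ∀ k l i j, |G k l i j| ≤ C) {p : K → ℝ}
    (hp : p ∈ stdSimplex ℝ K) (t : Strat I J L J) :
    ⨆ s : Strat I J K I, pay θ G (fun kl => p kl.1 * Q kl.1 kl.2) s t =
      ∑ k, p k * bestReplyPay θ G Q k t := by
  have hle (s : Strat I J K I) :
      pay θ G (fun kl => p kl.1 * Q kl.1 kl.2) s t ≤ ∑ k, p k * bestReplyPay θ G Q k t := by
    rw [pay_tensor_eq_sum_typePay]
    exact sum_le_sum fun k _ => mul_le_mul_of_nonneg_left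
      (typePay_le_bestReplyPay hθ0 hθ1 hQ hG k s t) (hp.1 k)
  refine le_antisymm (ciSup_le hle) (le_of_forall_pos_le_add fun ε hε => ?_)
  choose σ hσ using fun k => exists_lt_of_lt_ciSup (sub_lt_self (bestReplyPay θ G Q k t) hε)
  let s : Strat I J K I := ⟨fun k => (σ k).1 k, fun k => (σ k).2 k⟩
  have hs (k : K) : typePay θ G Q k s t = typePay θ G Q k (σ k) t := rfl
  calc ∑ k, p k * bestReplyPay θ G Q k t ≤ ∑ k, p k * (typePay θ G Q k s t + ε) :=
        sum_le_sum fun k _ => mul_le_mul_of_nonneg_left (by linarith [hσ k, hs k]) (hp.1 k)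
    _ = pay θ G (fun kl => p kl.1 * Q kl.1 kl.2) s t + ε := by
        rw [pay_tensor_eq_sum_typePay]
        simp only [mul_add, sum_add_distrib, ← sum_mul, hp.2, one_mul]
    _ ≤ _ := by gcongr; exact le_ciSup ⟨_, by rintro _ ⟨s, rfl⟩; exact hle s⟩ s

end TypePayoff

section KuhnMixture

variable {α A : Type*} [Fintype A] {pr : α → A} {w₁ w₂ : ℝ} {f₁ f₂ : List α → A → ℝ}

/-- Kuhn's mixture of the behavioral strategies `f₁`, `f₂` with weights `w₁`, `w₂`: after the
history `h` it plays `f₁ h` and `f₂ h` with the posterior weights of `f₁` and `f₂` given that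
`h` was reached (uniformly if `h` cannot be reached). -/
def kuhnMix (pr : α → A) (w₁ w₂ : ℝ) (f₁ f₂ : List α → A → ℝ) (h : List α) (b : A) : ℝ :=
  if w₁ * pathProb pr f₁ h + w₂ * pathProb pr f₂ h = 0 then (Fintype.card A : ℝ)⁻¹
  else (w₁ * pathProb pr f₁ h * f₁ h b + w₂ * pathProb pr f₂ h * f₂ h b) /
    (w₁ * pathProb pr f₁ h + w₂ * pathProb pr f₂ h)

lemma kuhnMix_mem_stdSimplex [Nonempty A] (hw₁ : 0 ≤ w₁) (hw₂ : 0 ≤ w₂)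
    (hf₁ : ∀ h, f₁ h ∈ stdSimplex ℝ A) (hf₂ : ∀ h, f₂ h ∈ stdSimplex ℝ A) (h : List α) :
    kuhnMix pr w₁ w₂ f₁ f₂ h ∈ stdSimplex ℝ A := by
  have hP₁ := pathProb_nonneg pr (fun h => (hf₁ h).1) h
  have hP₂ := pathProb_nonneg pr (fun h => (hf₂ h).1) h
  unfold kuhnMix
  split_ifs with hD
  · exact ⟨fun _ => by positivity, by simp⟩
  · refine ⟨fun b => ?_, ?_⟩
    · have := (hf₁ h).1 b
      have := (hf₂ h).1 b
      positivity
    · rw [← sum_div, div_eq_one_iff_eq hD, sum_add_distrib, ← mul_sum, ← mul_sum, (hf₁ h).2,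
        (hf₂ h).2, mul_one, mul_one]

lemma weight_mul_kuhnMix (hw₁ : 0 ≤ w₁) (hw₂ : 0 ≤ w₂) (hf₁ : ∀ h b, 0 ≤ f₁ h b)
    (hf₂ : ∀ h b, 0 ≤ f₂ h b) (h : List α) (b : A) :
    (w₁ * pathProb pr f₁ h + w₂ * pathProb pr f₂ h) * kuhnMix pr w₁ w₂ f₁ f₂ h b =
      w₁ * pathProb pr f₁ h * f₁ h b + w₂ * pathProb pr f₂ h * f₂ h b := by
  have hP₁ : 0 ≤ w₁ * pathProb pr f₁ h := mul_nonneg hw₁ (pathProb_nonneg pr hf₁ h)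
  have hP₂ : 0 ≤ w₂ * pathProb pr f₂ h := mul_nonneg hw₂ (pathProb_nonneg pr hf₂ h)
  unfold kuhnMix
  split_ifs with hD
  · obtain ⟨h₁, h₂⟩ := (add_eq_zero_iff_of_nonneg hP₁ hP₂).1 hD
    rw [h₁, h₂]
    simp
  · exact mul_div_cancel₀ _ hD

lemma pathProb_kuhnMix (hw₁ : 0 ≤ w₁) (hw₂ : 0 ≤ w₂) (hw : w₁ + w₂ = 1)
    (hf₁ : ∀ h b, 0 ≤ f₁ h b) (hf₂ : ∀ h b, 0 ≤ f₂ h b) (h : List α) :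
    pathProb pr (kuhnMix pr w₁ w₂ f₁ f₂) h = w₁ * pathProb pr f₁ h + w₂ * pathProb pr f₂ h := by
  induction h using List.reverseRecOn with
  | nil => simp [pathProb, hw]
  | append_singleton h a ih =>
    rw [pathProb_append, pathProb_append, pathProb_append, ih,
      weight_mul_kuhnMix hw₁ hw₂ hf₁ hf₂]
    ring

lemma pathProb_kuhnMix_mul (hw₁ : 0 ≤ w₁) (hw₂ : 0 ≤ w₂) (hw : w₁ + w₂ = 1)
    (hf₁ : ∀ h b, 0 ≤ f₁ h b) (hf₂ : ∀ h b, 0 ≤ f₂ h b) (h : List α) (b : A) :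
    pathProb pr (kuhnMix pr w₁ w₂ f₁ f₂) h * kuhnMix pr w₁ w₂ f₁ f₂ h b =
      w₁ * (pathProb pr f₁ h * f₁ h b) + w₂ * (pathProb pr f₂ h * f₂ h b) := by
  rw [pathProb_kuhnMix hw₁ hw₂ hw hf₁ hf₂, weight_mul_kuhnMix hw₁ hw₂ hf₁ hf₂]
  ring

end KuhnMixture

section Mixing

variable {I J : Type*} [Fintype I] [Fintype J] {w₁ w₂ : ℝ}

lemma stagePay_kuhnMix (hw₁ : 0 ≤ w₁) (hw₂ : 0 ≤ w₂) (hw : w₁ + w₂ = 1)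
    (σ : List (I × J) → I → ℝ) {t₁ t₂ : List (I × J) → J → ℝ} (ht₁ : ∀ h j, 0 ≤ t₁ h j)
    (ht₂ : ∀ h j, 0 ≤ t₂ h j) (g : I → J → ℝ) (m : ℕ) :
    stagePay σ (kuhnMix Prod.snd w₁ w₂ t₁ t₂) g m =
      w₁ * stagePay σ t₁ g m + w₂ * stagePay σ t₂ g m := by
  have hH (H : List (I × J)) :
      probH σ (kuhnMix Prod.snd w₁ w₂ t₁ t₂) H *
          ∑ i, ∑ j, σ H i * kuhnMix Prod.snd w₁ w₂ t₁ t₂ H j * g i j =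
        w₁ * (probH σ t₁ H * ∑ i, ∑ j, σ H i * t₁ H j * g i j) +
          w₂ * (probH σ t₂ H * ∑ i, ∑ j, σ H i * t₂ H j * g i j) := by
    simp only [probH_eq_pathProb_mul, mul_sum, ← sum_add_distrib]
    refine sum_congr rfl fun i _ => sum_congr rfl fun j _ => ?_
    linear_combination (pathProb Prod.fst σ H * σ H i * g i j) *
      pathProb_kuhnMix_mul hw₁ hw₂ hw ht₁ ht₂ H j
  simp only [stagePay, hH, mul_sum, sum_add_distrib]

variable [Nonempty J] {L : Type*}

def Strat.kuhnMix (hw₁ : 0 ≤ w₁) (hw₂ : 0 ≤ w₂) (t₁ t₂ : Strat I J L J) : Strat I J L J :=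
  ⟨fun l => _root_.kuhnMix Prod.snd w₁ w₂ (t₁.1 l) (t₂.1 l),
    fun l => kuhnMix_mem_stdSimplex hw₁ hw₂ (t₁.2 l) (t₂.2 l)⟩

variable {K : Type*} [Fintype L] {θ : ℕ → ℝ} {G : K → L → I → J → ℝ} {Q : K → L → ℝ} {C : ℝ}

lemma typePay_kuhnMix (hθ0 : ∀ m, 0 ≤ θ m) (hθ1 : HasSum θ 1) (hG : ∀ k l i j, |G k l i j| ≤ C)
    (hw₁ : 0 ≤ w₁) (hw₂ : 0 ≤ w₂) (hw : w₁ + w₂ = 1) (k : K) (s : Strat I J K I)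
    (t₁ t₂ : Strat I J L J) :
    typePay θ G Q k s (Strat.kuhnMix hw₁ hw₂ t₁ t₂) =
      w₁ * typePay θ G Q k s t₁ + w₂ * typePay θ G Q k s t₂ := by
  have hsum (t : Strat I J L J) (l : L) :=
    summable_mul_of_abs_le hθ0 hθ1 (abs_stagePay_le (s.2 k) (t.2 l) (hG k l))
  have hl (l : L) :
      ∑' m, θ m * stagePay (s.1 k) ((Strat.kuhnMix hw₁ hw₂ t₁ t₂).1 l) (G k l) m =
        w₁ * ∑' m, θ m * stagePay (s.1 k) (t₁.1 l) (G k l) m +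
          w₂ * ∑' m, θ m * stagePay (s.1 k) (t₂.1 l) (G k l) m := by
    rw [← tsum_mul_left, ← tsum_mul_left, ← ((hsum t₁ l).mul_left w₁).tsum_add
      ((hsum t₂ l).mul_left w₂)]
    refine tsum_congr fun m => ?_
    rw [Strat.kuhnMix, stagePay_kuhnMix hw₁ hw₂ hw _ (fun h => (t₁.2 l h).1)
      (fun h => (t₂.2 l h).1)]
    ring
  simp only [typePay, hl, mul_add, sum_add_distrib, mul_left_comm (Q k _), mul_sum]

lemma bestReplyPay_kuhnMix_le [Fintype K] [Nonempty I] (hθ0 : ∀ m, 0 ≤ θ m) (hθ1 : HasSum θ 1)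
    (hQ : ∀ k, Q k ∈ stdSimplex ℝ L) (hG : ∀ k l i j, |G k l i j| ≤ C) (hw₁ : 0 ≤ w₁)
    (hw₂ : 0 ≤ w₂) (hw : w₁ + w₂ = 1) (k : K) (t₁ t₂ : Strat I J L J) :
    bestReplyPay θ G Q k (Strat.kuhnMix hw₁ hw₂ t₁ t₂) ≤
      w₁ * bestReplyPay θ G Q k t₁ + w₂ * bestReplyPay θ G Q k t₂ := by
  refine ciSup_le fun s => ?_
  rw [typePay_kuhnMix hθ0 hθ1 hG hw₁ hw₂ hw]
  gcongr <;> exact typePay_le_bestReplyPay hθ0 hθ1 hQ hG k s _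

end Mixing

section Separation

variable {K : Type*} [Fintype K]

lemma exists_nonneg_separating_weights {S : Set (K → ℝ)} (hS : Convex ℝ S) (hSne : S.Nonempty)
    (hup : ∀ y ∈ S, ∀ z, y ≤ z → z ∈ S) {M : ℝ} (hM : ∀ y ∈ S, ∃ k, M ≤ y k) :
    ∃ c : K → ℝ, (∀ k, 0 ≤ c k) ∧ 0 < ∑ k, c k ∧ ∀ y ∈ S, M * ∑ k, c k ≤ ∑ k, c k * y k := by
  classical
  let U : Set (K → ℝ) := Set.univ.pi fun _ => Set.Iio M
  have hU (r : ℝ) (hr : r < M) : (fun _ => r) ∈ U := fun _ _ => hr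
  have hdisj : Disjoint U S := Set.disjoint_left.2 fun y hyU hyS => by
    obtain ⟨k, hk⟩ := hM y hyS
    exact (hk.trans_lt (hyU k (Set.mem_univ k))).false
  obtain ⟨f, u, hfU, hfS⟩ := geometric_hahn_banach_open (convex_pi fun _ _ => convex_Iio M)
    (isOpen_set_pi Set.finite_univ fun _ _ => isOpen_Iio) hS hdisj
  let e (k : K) : K → ℝ := fun j => if k = j then 1 else 0
  let c (k : K) : ℝ := f (e k)
  have hf (y : K → ℝ) : f y = ∑ k, c k * y k := by
    rw [← f.coe_coe, LinearMap.pi_apply_eq_sum_univ]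
    simp only [smul_eq_mul, mul_comm, c, e, f.coe_coe]
  obtain ⟨y₀, hy₀⟩ := hSne
  -- `S` is upward closed, so `f` cannot decrease along a coordinate direction.
  have hc (k : K) : 0 ≤ c k := by
    by_contra! hck
    have hn : 0 ≤ (u - f y₀) / c k := div_nonneg_of_nonpos (sub_nonpos.2 (hfS y₀ hy₀)) hck.le
    have he : 0 ≤ e k := fun j => by simp only [e]; split_ifs <;> norm_num
    have hmem := hfS _ (hup _ hy₀ _ (le_add_of_nonneg_right
      (smul_nonneg (add_nonneg hn zero_le_one) he)))
    rw [map_add, map_smul, smul_eq_mul, add_mul, div_mul_cancel₀ _ hck.ne] at hmem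
    linarith
  have hcsum : 0 < ∑ k, c k := by
    refine (sum_nonneg fun k _ => hc k).lt_of_ne fun h => ?_
    have hc0 (k : K) : c k = 0 :=
      (sum_eq_zero_iff_of_nonneg fun k _ => hc k).1 h.symm k (mem_univ k)
    have h₁ := hfU _ (hU (M - 1) (by linarith))
    have h₂ := hfS _ hy₀
    simp only [hf, hc0, zero_mul, sum_const_zero] at h₁ h₂
    linarith
  -- The constant vector `M` lies in the closure of `U`.
  have hMu : M * ∑ k, c k ≤ u := by
    refine le_of_forall_pos_lt_add fun ε hε => ?_
    have h := hfU _ (hU (M - ε / ∑ k, c k) (sub_lt_self M (div_pos hε hcsum)))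
    rw [hf, ← sum_mul, mul_sub, mul_div_cancel₀ _ hcsum.ne'] at h
    linarith
  exact ⟨c, hc, hcsum, fun y hy => (hf y) ▸ hMu.trans (hfS y hy)⟩

lemma exists_mem_stdSimplex_le_sum_mul {S : Set (K → ℝ)} (hS : Convex ℝ S) (hSne : S.Nonempty)
    (hup : ∀ y ∈ S, ∀ z, y ≤ z → z ∈ S) {M : ℝ} (hM : ∀ y ∈ S, ∃ k, M ≤ y k) :
    ∃ q ∈ stdSimplex ℝ K, ∀ y ∈ S, M ≤ ∑ k, q k * y k := by
  obtain ⟨c, hc, hcsum, hcS⟩ := exists_nonneg_separating_weights hS hSne hup hM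
  refine ⟨fun k => c k / ∑ k, c k, ⟨fun k => div_nonneg (hc k) hcsum.le,
    by rw [← sum_div, div_self hcsum.ne']⟩, fun y hy => ?_⟩
  simp only [div_mul_eq_mul_div, ← sum_div]
  exact (le_div_iff₀ hcsum).2 (hcS y hy)

/-- The minimax inequality `⨅ t, maxₖ g t k ≤ ⨆ q ∈ Δ(K), ⨅ t, ⟨q, g t⟩`, for `g` convex-like
in `t`. -/
lemma exists_mem_stdSimplex_le_sum_mul_of_convexLike {T : Type*} [Nonempty T] (g : T → K → ℝ)
    (hg : ∀ t₁ t₂ w₁ w₂, 0 ≤ w₁ → 0 ≤ w₂ → w₁ + w₂ = 1 →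
      ∃ t, ∀ k, g t k ≤ w₁ * g t₁ k + w₂ * g t₂ k)
    {M : ℝ} (hM : ∀ t, ∃ k, M ≤ g t k) :
    ∃ q ∈ stdSimplex ℝ K, ∀ t, M ≤ ∑ k, q k * g t k := by
  let S : Set (K → ℝ) := {y | ∃ t, g t ≤ y}
  have hS : Convex ℝ S := by
    rintro y₁ ⟨t₁, ht₁⟩ y₂ ⟨t₂, ht₂⟩ w₁ w₂ hw₁ hw₂ hw
    obtain ⟨t, ht⟩ := hg t₁ t₂ w₁ w₂ hw₁ hw₂ hw
    refine ⟨t, fun k => (ht k).trans ?_⟩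
    simp only [Pi.add_apply, Pi.smul_apply, smul_eq_mul]
    gcongr
    exacts [ht₁ k, ht₂ k]
  obtain ⟨q, hq, hqS⟩ := exists_mem_stdSimplex_le_sum_mul hS
    ⟨g (Classical.arbitrary T), _, le_rfl⟩ (fun y ⟨t, ht⟩ z hyz => ⟨t, ht.trans hyz⟩)
    (fun y ⟨t, ht⟩ => (hM t).imp fun k hk => hk.trans (ht k))
  exact ⟨q, hq, fun t => hqS _ ⟨t, le_rfl⟩⟩

end Separation

section DualGame

variable {I J K L : Type*} [Fintype I] [Fintype J] [Fintype K] [Fintype L]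
  {θ : ℕ → ℝ} {G : K → L → I → J → ℝ} {Q : K → L → ℝ} {C : ℝ}

lemma exists_forall_hDual_le [Nonempty K] (hθ0 : ∀ m, 0 ≤ θ m) (hθ1 : HasSum θ 1)
    (hQ : ∀ k, Q k ∈ stdSimplex ℝ L) (hG : ∀ k l i j, |G k l i j| ≤ C) (x : K → ℝ)
    (t : Strat I J L J) :
    ∃ k, ∀ q ∈ stdSimplex ℝ K, ∀ s : Strat I J K I,
      hDual θ G x Q (fun _ => 1) q s t ≤ bestReplyPay θ G Q k t - x k := by
  obtain ⟨k, hk⟩ := Finite.exists_max fun k => bestReplyPay θ G Q k t - x k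
  refine ⟨k, fun q hq s => ?_⟩
  rw [hDual_one_eq_sum]
  exact sum_mul_le_of_mem_stdSimplex hq fun k' =>
    (sub_le_sub_right (typePay_le_bestReplyPay hθ0 hθ1 hQ hG k' s t) _).trans (hk k')

lemma bddAbove_hDual [Nonempty K] (hθ0 : ∀ m, 0 ≤ θ m) (hθ1 : HasSum θ 1)
    (hQ : ∀ k, Q k ∈ stdSimplex ℝ L) (hG : ∀ k l i j, |G k l i j| ≤ C) (x : K → ℝ)
    (t : Strat I J L J) :
    BddAbove (Set.range fun ps : stdSimplex ℝ K × Strat I J K I =>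
      hDual θ G x Q (fun _ => 1) ps.1 ps.2 t) :=
  let ⟨_, hk⟩ := exists_forall_hDual_le hθ0 hθ1 hQ hG x t
  ⟨_, by rintro _ ⟨ps, rfl⟩; exact hk ps.1 ps.1.2 ps.2⟩

lemma wPlus_le_iSup_hDual [Nonempty I] [Nonempty K] (hθ0 : ∀ m, 0 ≤ θ m) (hθ1 : HasSum θ 1)
    (hQ : ∀ k, Q k ∈ stdSimplex ℝ L) (hG : ∀ k l i j, |G k l i j| ≤ C) (x : K → ℝ)
    (t : Strat I J L J) :
    wPlus θ G x Q (fun _ => 1) ≤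
      ⨆ ps : stdSimplex ℝ K × Strat I J K I, hDual θ G x Q (fun _ => 1) ps.1 ps.2 t := by
  classical
  obtain ⟨B, hB⟩ := (Set.finite_range x).bddAbove
  let k₀ := Classical.arbitrary K
  refine ciInf_le ⟨-C - B, ?_⟩ t
  rintro _ ⟨t, rfl⟩
  refine le_trans ?_ (le_ciSup (bddAbove_hDual hθ0 hθ1 hQ hG x t)
    (⟨Pi.single k₀ 1, single_mem_stdSimplex ℝ k₀⟩, Classical.arbitrary _))
  rw [hDual_one_eq_sum]
  refine le_sum_mul_of_mem_stdSimplex (single_mem_stdSimplex ℝ k₀) fun k => ?_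
  linarith [(abs_le.1 (abs_typePay_le hθ0 hθ1 hQ hG k (Classical.arbitrary _) t)).1,
    hB ⟨k, rfl⟩]

lemma exists_wPlus_add_le_vPlus [Nonempty I] [Nonempty J] [Nonempty K] (hθ0 : ∀ m, 0 ≤ θ m)
    (hθ1 : HasSum θ 1) (hQ : ∀ k, Q k ∈ stdSimplex ℝ L) (hG : ∀ k l i j, |G k l i j| ≤ C)
    (x : K → ℝ) :
    ∃ q ∈ stdSimplex ℝ K, wPlus θ G x Q (fun _ => 1) + ∑ k, q k * x k ≤
      vPlus (I := I) (J := J) θ G (fun kl => q kl.1 * Q kl.1 kl.2) := by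
  obtain ⟨q, hq, hwq⟩ := exists_mem_stdSimplex_le_sum_mul_of_convexLike
    (fun t k => bestReplyPay θ G Q k t - x k)
    (fun t₁ t₂ w₁ w₂ hw₁ hw₂ hw => ⟨Strat.kuhnMix hw₁ hw₂ t₁ t₂, fun k => by
      linear_combination bestReplyPay_kuhnMix_le hθ0 hθ1 hQ hG hw₁ hw₂ hw k t₁ t₂ + x k * hw⟩)
    (M := wPlus θ G x Q (fun _ => 1))
    (fun t => let ⟨k, hk⟩ := exists_forall_hDual_le hθ0 hθ1 hQ hG x t
      ⟨k, (wPlus_le_iSup_hDual hθ0 hθ1 hQ hG x t).trans (ciSup_le fun ps => hk _ ps.1.2 _)⟩)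
  refine ⟨q, hq, le_ciInf fun t => ?_⟩
  rw [ciSup_pay_tensor hθ0 hθ1 hQ hG hq]
  have h := hwq t
  simp only [mul_sub, sum_sub_distrib] at h
  linarith

end DualGame

end

theorem stmt_19_general
    {K L I J : Type*} [Fintype K] [Fintype L] [Fintype I] [Fintype J]
    [Nonempty K] [Nonempty I] [Nonempty J]
    (G : K → L → I → J → ℝ)
    (θ : ℕ → ℝ) (hθ0 : ∀ m, 0 ≤ θ m) (hθ1 : HasSum θ 1)
    (p : K → ℝ) (hp : p ∈ stdSimplex ℝ K)
    (Q : K → L → ℝ) (hQ : ∀ k, Q k ∈ stdSimplex ℝ L)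
    (π : K × L → ℝ) (hπ : ∀ k l, π (k, l) = p k * Q k l)
    (x : K → ℝ)
    (hx : ∀ p' ∈ stdSimplex ℝ K,
      vPlus (I := I) (J := J) θ G (fun kl => p' kl.1 * Q kl.1 kl.2) ≤
        vPlus (I := I) (J := J) θ G (fun kl => p kl.1 * Q kl.1 kl.2) +
          ∑ k, x k * (p' k - p k))
    (ε : ℝ)
    (tε : Strat I J L J)
    (htε : (⨆ ps : stdSimplex ℝ K × Strat I J K I,
        hDual θ G x Q (fun _ => 1) (ps.1 : K → ℝ) ps.2 tε) ≤
      wPlus (I := I) (J := J) θ G x Q (fun _ => 1) + ε) :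
    (⨆ s : Strat I J K I, pay θ G π s tε) ≤ vPlus θ G π + ε := by
  obtain rfl : π = fun kl => p kl.1 * Q kl.1 kl.2 := funext fun kl => hπ kl.1 kl.2
  obtain ⟨C, hC⟩ :=
    (Set.finite_range fun q : K × L × I × J => |G q.1 q.2.1 q.2.2.1 q.2.2.2|).bddAbove
  have hG (k l i j) : |G k l i j| ≤ C := hC ⟨(k, l, i, j), rfl⟩
  obtain ⟨q, hq, hwq⟩ := exists_wPlus_add_le_vPlus (I := I) (J := J) hθ0 hθ1 hQ hG x
  have hprimal : (⨆ s : Strat I J K I, pay θ G (fun kl => p kl.1 * Q kl.1 kl.2) s tε) ≤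
      (⨆ ps : stdSimplex ℝ K × Strat I J K I, hDual θ G x Q (fun _ => 1) ps.1 ps.2 tε) +
        ∑ k, p k * x k :=
    ciSup_le fun s => by
      have h : hDual θ G x Q (fun _ => 1) p s tε ≤ _ :=
        le_ciSup (bddAbove_hDual hθ0 hθ1 hQ hG x tε) (⟨p, hp⟩, s)
      have hpay : hDual θ G x Q (fun _ => 1) p s tε =
          pay θ G (fun kl => p kl.1 * Q kl.1 kl.2) s tε - ∑ k, p k * x k := rfl
      linarith
  have hsub : ∑ k, x k * (q k - p k) = ∑ k, q k * x k - ∑ k, p k * x k := by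
    simp only [mul_sub, sum_sub_distrib, mul_comm]
  linarith [hx q hq]

/-- let `π = p ⊗ Q`, let `x` be a supergradient at `p` of
`p' ↦ v_θ(p'⊗Q)` (the value of `𝒢_θ(p'⊗Q)`, here its minmax `vPlus`, extended
by `−∞` outside `Δ(K)` so the supergradient inequality need only be tested on
`Δ(K)`), and let `t̂ε` be an `ε`-optimal strategy of player 2 in the dual game
`𝒟[𝒢_θ](x,Q;𝟏)`.  Then `t̂ε` is `ε`-optimal for player 2 in `𝒢_θ(π)`:
`sup_ŝ γ_θ(π,ŝ,t̂ε) ≤ v_θ(π) + ε`. -/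
theorem stmt_19
    {K L I J : Type*} [Fintype K] [Fintype L] [Fintype I] [Fintype J]
    [Nonempty K] [Nonempty L] [Nonempty I] [Nonempty J]
    (G : K → L → I → J → ℝ)
    (θ : ℕ → ℝ) (hθ0 : ∀ m, 0 ≤ θ m) (hθ1 : HasSum θ 1)
    (p : K → ℝ) (hp : p ∈ stdSimplex ℝ K)
    (Q : K → L → ℝ) (hQ : ∀ k, Q k ∈ stdSimplex ℝ L)
    (π : K × L → ℝ) (hπ : ∀ k l, π (k, l) = p k * Q k l)
    (x : K → ℝ)
    (hx : ∀ p' ∈ stdSimplex ℝ K,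
      vPlus (I := I) (J := J) θ G (fun kl => p' kl.1 * Q kl.1 kl.2) ≤
        vPlus (I := I) (J := J) θ G (fun kl => p kl.1 * Q kl.1 kl.2) +
          ∑ k, x k * (p' k - p k))
    (ε : ℝ) (hε : 0 ≤ ε)
    (tε : Strat I J L J)
    (htε : (⨆ ps : stdSimplex ℝ K × Strat I J K I,
        hDual θ G x Q (fun _ => 1) (ps.1 : K → ℝ) ps.2 tε) ≤
      wPlus (I := I) (J := J) θ G x Q (fun _ => 1) + ε) :
    (⨆ s : Strat I J K I, pay θ G π s tε) ≤ vPlus θ G π + ε :=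
  stmt_19_general G θ hθ0 hθ1 p hp Q hQ π hπ x hx ε tε htε
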